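/- arXiv:2502.00084 — 3 statements merged into one kernel-verified Lean document; each statement's English description precedes it below -/
import Mathlib

section
/- Let A, B be real symmetric positive definite d×d matrices and set M := A^{1/2} B A^{1/2}. Define the linear maps T_0(x) := A^{−1/2} M^{1/2} A^{−1/2} x and, for ε > 0, T_ε(x) := (A^{−1/2} (M + (ε²/4) I_d)^{1/2} A^{−1/2} − (ε/2) A^{−1}) x. (T_0 is the Brenier map and T_ε the entropic Brenier map between the Gaussian measures N(0,A) and N(0,B).) Then for every R > 0 and every ε > 0, sup_{|x| ≤ R} |T_ε(x) − T_0(x)| ≤ R ε (‖A^{−1}‖_op / 2) · ( ε ‖M^{−1}‖_op^{1/2} / 4 + ε³ ‖M^{−1}‖_op^{3/2} / 16 + 1 ). -/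
/-!
Writing `c = ε / 2`, the difference of the two maps is `A^{-1/2} (M_ε^{1/2} - M^{1/2} - c) A^{-1/2}`.
Both square roots are functions of `M^{1/2}`: the middle factor is `f(M^{1/2})` with
`f t = √(t² + c²) - t - c`, and `t ≤ √(t² + c²) ≤ t + c` gives `|f| ≤ c` on `t ≥ 0`, so it has
operator norm at most `c`. Since `‖A^{-1/2}‖² = ‖A^{-1}‖`, the difference is bounded by
`R ε ‖A^{-1}‖ / 2`, and the remaining factor of the claimed bound is at least `1`.
-/

open Matrix

/-- The operator norm of a square matrix with respect to the Euclidean norm on `ℝ^d`. -/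
noncomputable def matOpNorm {d : ℕ} (M : Matrix (Fin d) (Fin d) ℝ) : ℝ :=
  ‖(Matrix.toEuclideanCLM (𝕜 := ℝ) M :
      EuclideanSpace ℝ (Fin d) →L[ℝ] EuclideanSpace ℝ (Fin d))‖

open scoped Matrix.Norms.L2Operator MatrixOrder

lemma matOpNorm_eq_l2_opNorm {d : ℕ} (M : Matrix (Fin d) (Fin d) ℝ) : matOpNorm M = ‖M‖ := rfl

lemma abs_sqrt_sq_add_sq_sub_sub_le {t c : ℝ} (ht : 0 ≤ t) (hc : 0 ≤ c) :
    |√(t ^ 2 + c ^ 2) - t - c| ≤ c := by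
  have lower : t ≤ √(t ^ 2 + c ^ 2) := Real.le_sqrt_of_sq_le (by nlinarith)
  have upper : √(t ^ 2 + c ^ 2) ≤ t + c := Real.sqrt_le_iff.mpr ⟨by positivity, by nlinarith⟩
  rw [abs_le]
  constructor <;> linarith

namespace Matrix

variable {n : Type*} [Fintype n] [DecidableEq n]

lemma l2_opNorm_cfc_le {T : Matrix n n ℝ} (hT : T.IsHermitian) {f : ℝ → ℝ} {c : ℝ} (hc : 0 ≤ c)
    (hf : ∀ i, |f (hT.eigenvalues i)| ≤ c) : ‖cfc f T‖ ≤ c := by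
  rw [hT.cfc_eq, IsHermitian.cfc, Unitary.conjStarAlgAut_apply,
    CStarRing.norm_mul_mem_unitary _ (Unitary.star_mem (SetLike.coe_mem _)),
    CStarRing.norm_mem_unitary_mul _ (SetLike.coe_mem _), l2_opNorm_diagonal]
  exact pi_norm_le_iff_of_nonneg hc |>.mpr fun i => by simpa using hf i

lemma IsHermitian.l2_opNorm_mul_mul_self_le {P : Matrix n n ℝ} (hP : P.IsHermitian)
    (X : Matrix n n ℝ) : ‖P * X * P‖ ≤ ‖P * P‖ * ‖X‖ := by
  have hPP : ‖P * P‖ = ‖P‖ * ‖P‖ := by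
    rw [← l2_opNorm_conjTranspose_mul_self, hP.eq]
  calc ‖P * X * P‖ ≤ ‖P‖ * ‖X‖ * ‖P‖ :=
        (norm_mul_le _ _).trans (mul_le_mul_of_nonneg_right (norm_mul_le _ _) (norm_nonneg _))
    _ = ‖P * P‖ * ‖X‖ := by rw [hPP]; ring

lemma PosSemidef.sub_sub_smul_one_eq_cfc {S T : Matrix n n ℝ} (hS : S.PosSemidef)
    (hT : T.PosSemidef) {c : ℝ} (h : S * S = T * T + c ^ 2 • 1) :
    S - T - c • 1 = cfc (fun t => √(t ^ 2 + c ^ 2) - t - c) T := by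
  have hT' : IsSelfAdjoint T := hT.1
  have hS_eq : S = cfc (fun t => √(t ^ 2 + c ^ 2)) T := by
    rw [← CFC.mul_self_eq_mul_self_iff S _ hS.nonneg (cfc_nonneg fun t _ => Real.sqrt_nonneg _),
      ← cfc_mul .., h]
    simp only [Real.mul_self_sqrt (by positivity : (0 : ℝ) ≤ _ ^ 2 + c ^ 2)]
    rw [cfc_add .., cfc_pow_id T 2, cfc_const .., Algebra.algebraMap_eq_smul_one, sq, sq]
  rw [cfc_sub .., cfc_sub .., cfc_id' .., cfc_const .., Algebra.algebraMap_eq_smul_one, ← hS_eq]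

lemma PosSemidef.l2_opNorm_sub_sub_smul_one_le {S T : Matrix n n ℝ} (hS : S.PosSemidef)
    (hT : T.PosSemidef) {c : ℝ} (hc : 0 ≤ c) (h : S * S = T * T + c ^ 2 • 1) :
    ‖S - T - c • 1‖ ≤ c := by
  rw [hS.sub_sub_smul_one_eq_cfc hT h]
  exact l2_opNorm_cfc_le hT.1 hc fun i => abs_sqrt_sq_add_sq_sub_sub_le (hT.eigenvalues_nonneg i) hc

end Matrix

theorem gaussian_entropic_map_uniform_bound_general {d : ℕ}
    (A B : Matrix (Fin d) (Fin d) ℝ)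
    (sA : Matrix (Fin d) (Fin d) ℝ) (hsA : sA.PosDef) (hsA2 : sA * sA = A)
    (sM : Matrix (Fin d) (Fin d) ℝ) (hsM : sM.PosDef) (hsM2 : sM * sM = sA * B * sA)
    (ε R : ℝ) (hε : 0 < ε)
    (sMε : Matrix (Fin d) (Fin d) ℝ) (hsMε : sMε.PosDef)
    (hsMε2 : sMε * sMε = sA * B * sA + (ε ^ 2 / 4) • (1 : Matrix (Fin d) (Fin d) ℝ)) :
    ∀ x : EuclideanSpace ℝ (Fin d), ‖x‖ ≤ R →
      ‖(Matrix.toEuclideanCLM (𝕜 := ℝ) (sA⁻¹ * sMε * sA⁻¹ - (ε / 2) • A⁻¹)) x -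
        (Matrix.toEuclideanCLM (𝕜 := ℝ) (sA⁻¹ * sM * sA⁻¹)) x‖ ≤
      R * ε * (matOpNorm A⁻¹ / 2) *
        (ε * matOpNorm (sA * B * sA)⁻¹ ^ ((1 : ℝ) / 2) / 4 +
          ε ^ 3 * matOpNorm (sA * B * sA)⁻¹ ^ ((3 : ℝ) / 2) / 16 + 1) := by
  intro x hx
  have hA_inv : sA⁻¹ * sA⁻¹ = A⁻¹ := by rw [← Matrix.mul_inv_rev, hsA2]
  have h_diff : sA⁻¹ * sMε * sA⁻¹ - (ε / 2) • A⁻¹ - sA⁻¹ * sM * sA⁻¹ =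
      sA⁻¹ * (sMε - sM - (ε / 2) • 1) * sA⁻¹ := by
    rw [← hA_inv]
    noncomm_ring
  have h_core : ‖sMε - sM - (ε / 2) • 1‖ ≤ ε / 2 :=
    hsMε.posSemidef.l2_opNorm_sub_sub_smul_one_le hsM.posSemidef (by positivity)
      (by rw [hsMε2, hsM2]; ring_nf)
  have h_bound : ‖(Matrix.toEuclideanCLM (𝕜 := ℝ) (sA⁻¹ * sMε * sA⁻¹ - (ε / 2) • A⁻¹)) x -
      (Matrix.toEuclideanCLM (𝕜 := ℝ) (sA⁻¹ * sM * sA⁻¹)) x‖ ≤ R * ε * (matOpNorm A⁻¹ / 2) := by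
    rw [← _root_.sub_apply, ← map_sub, h_diff]
    calc _ ≤ ‖sA⁻¹ * (sMε - sM - (ε / 2) • 1) * sA⁻¹‖ * ‖x‖ :=
          ContinuousLinearMap.le_opNorm _ _
      _ ≤ ‖A⁻¹‖ * (ε / 2) * R := by
          rw [← hA_inv]
          gcongr
          exact (hsA.1.inv.l2_opNorm_mul_mul_self_le _).trans (by gcongr)
      _ = R * ε * (matOpNorm A⁻¹ / 2) := by rw [matOpNorm_eq_l2_opNorm]; ring
  have h_factor : 1 ≤ ε * matOpNorm (sA * B * sA)⁻¹ ^ ((1 : ℝ) / 2) / 4 +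
      ε ^ 3 * matOpNorm (sA * B * sA)⁻¹ ^ ((3 : ℝ) / 2) / 16 + 1 := by
    rw [le_add_iff_nonneg_left, matOpNorm_eq_l2_opNorm]
    positivity
  have hR : 0 ≤ R := (norm_nonneg x).trans hx
  exact h_bound.trans (le_mul_of_one_le_right (by rw [matOpNorm_eq_l2_opNorm]; positivity) h_factor)

/-- explicit bound, uniform on the ball of radius `R`, between the entropic
Brenier map `T_ε` and the Brenier map `T_0` of two centered Gaussians `N(0,A)`, `N(0,B)`.
Here `sA` is the symmetric positive definite square root of `A`, `M = A^{1/2} B A^{1/2}`,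
`sM` its square root, and `sMε` the square root of `M + (ε²/4) I`. -/
theorem gaussian_entropic_map_uniform_bound {d : ℕ}
    (A B : Matrix (Fin d) (Fin d) ℝ) (hA : A.PosDef) (hB : B.PosDef)
    (sA : Matrix (Fin d) (Fin d) ℝ) (hsA : sA.PosDef) (hsA2 : sA * sA = A)
    (sM : Matrix (Fin d) (Fin d) ℝ) (hsM : sM.PosDef) (hsM2 : sM * sM = sA * B * sA)
    (ε R : ℝ) (hε : 0 < ε) (hR : 0 < R)
    (sMε : Matrix (Fin d) (Fin d) ℝ) (hsMε : sMε.PosDef)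
    (hsMε2 : sMε * sMε = sA * B * sA + (ε ^ 2 / 4) • (1 : Matrix (Fin d) (Fin d) ℝ)) :
    ∀ x : EuclideanSpace ℝ (Fin d), ‖x‖ ≤ R →
      ‖(Matrix.toEuclideanCLM (𝕜 := ℝ) (sA⁻¹ * sMε * sA⁻¹ - (ε / 2) • A⁻¹)) x -
        (Matrix.toEuclideanCLM (𝕜 := ℝ) (sA⁻¹ * sM * sA⁻¹)) x‖ ≤
      R * ε * (matOpNorm A⁻¹ / 2) *
        (ε * matOpNorm (sA * B * sA)⁻¹ ^ ((1 : ℝ) / 2) / 4 +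
          ε ^ 3 * matOpNorm (sA * B * sA)⁻¹ ^ ((3 : ℝ) / 2) / 16 + 1) :=
  gaussian_entropic_map_uniform_bound_general A B sA hsA hsA2 sM hsM hsM2 ε R hε sMε hsMε hsMε2
end

section
/- Let ε > 0, let ν be a probability measure on ℝ^d with finite second moment, and let ψ : ℝ^d → ℝ be a Borel function such that for every x ∈ ℝ^d, 0 < ∫ exp((x·y − ψ(y))/ε) dν(y) < ∞ and ∫ |y| · exp((x·y − ψ(y))/ε) dν(y) < ∞. Then the function φ(x) := ε log ∫ exp((x·y − ψ(y))/ε) dν(y) is differentiable on ℝ^d and its gradient is given by ∇φ(x) = (∫ y · exp((x·y − ψ(y))/ε) dν(y)) / (∫ exp((x·y − ψ(y))/ε) dν(y)). -/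
/-!
Differentiate `Z(z) = ∫ exp ((⟪z, y⟫ - ψ y) / ε) dν(y)` under the integral sign; then
`∇(ε log Z) = ε ∇Z / Z`. The only difficulty is a dominating function for the derivative
`ε⁻¹ ‖y‖ exp ((⟪z, y⟫ - ψ y) / ε)` uniformly for `z` near `x`, since integrability is only
assumed pointwise in `z`. In an orthonormal basis, `‖y‖ ≤ ∑ᵢ |yᵢ| = ⟪σ, y⟫` for a suitable
sign vector `σ`, so for `‖z - x‖ ≤ 1` the integrand at `z` is bounded by the sum of the
integrands at the finitely many points `x + σ`, each of which is integrable.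
-/

open MeasureTheory Real
open scoped RealInnerProductSpace

variable {E : Type*} [NormedAddCommGroup E] [InnerProductSpace ℝ E]

namespace OrthonormalBasis

variable {ι : Type*} [Fintype ι] (b : OrthonormalBasis ι ℝ E)

noncomputable def signVertex (σ : ι → SignType) : E := ∑ i, (σ i : ℝ) • b i

theorem exists_norm_le_inner_signVertex (y : E) : ∃ σ, ‖y‖ ≤ ⟪b.signVertex σ, y⟫ := by
  refine ⟨fun i => SignType.sign ⟪b i, y⟫, ?_⟩
  have hsum : ⟪b.signVertex (fun i => SignType.sign ⟪b i, y⟫), y⟫ = ∑ i, |⟪b i, y⟫| := by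
    simp [signVertex, sum_inner, real_inner_smul_left, sign_mul_self]
  calc ‖y‖ = ‖∑ i, ⟪b i, y⟫ • b i‖ := by rw [b.sum_repr']
    _ ≤ ∑ i, ‖⟪b i, y⟫ • b i‖ := norm_sum_le _ _
    _ = _ := by simp [hsum, norm_smul]

theorem exists_inner_le_inner_add_signVertex {x z : E} (hz : z ∈ Metric.closedBall x 1) (y : E) :
    ∃ σ, ⟪z, y⟫ ≤ ⟪x + b.signVertex σ, y⟫ := by
  obtain ⟨σ, hσ⟩ := b.exists_norm_le_inner_signVertex y
  refine ⟨σ, ?_⟩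
  have hzx : ⟪z - x, y⟫ ≤ ‖y‖ :=
    calc ⟪z - x, y⟫ ≤ ‖z - x‖ * ‖y‖ := real_inner_le_norm _ _
      _ ≤ 1 * ‖y‖ := by gcongr; rwa [← dist_eq_norm]
      _ = ‖y‖ := one_mul _
  rw [inner_add_left]
  rw [inner_sub_left] at hzx
  linarith

variable [DecidableEq ι]

theorem exp_le_sum_exp_signVertex {ε : ℝ} (hε : 0 < ε) (c : ℝ) {x z : E}
    (hz : z ∈ Metric.closedBall x 1) (y : E) :
    exp ((⟪z, y⟫ - c) / ε) ≤ ∑ σ, exp ((⟪x + b.signVertex σ, y⟫ - c) / ε) := by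
  obtain ⟨σ, hσ⟩ := b.exists_inner_le_inner_add_signVertex hz y
  calc exp ((⟪z, y⟫ - c) / ε) ≤ exp ((⟪x + b.signVertex σ, y⟫ - c) / ε) := by gcongr
    _ ≤ _ := Finset.single_le_sum (f := fun τ => exp ((⟪x + b.signVertex τ, y⟫ - c) / ε))
      (fun _ _ => (exp_pos _).le) (Finset.mem_univ σ)

end OrthonormalBasis

theorem hasFDerivAt_exp_inner_sub_div (ε c : ℝ) (y z : E) :
    HasFDerivAt (fun w => exp ((⟪w, y⟫ - c) / ε))
      (ε⁻¹ • innerSL ℝ (exp ((⟪z, y⟫ - c) / ε) • y)) z := by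
  have hinner : HasFDerivAt (fun w => ⟪w, y⟫) (innerSL ℝ y) z := by
    convert (innerSL ℝ y).hasFDerivAt using 1
    exact funext fun w => real_inner_comm y w
  simp_rw [div_eq_mul_inv]
  convert ((hinner.sub_const c).mul_const ε⁻¹).exp using 1
  ext w
  simp only [map_smul, smul_apply, coe_innerSL_apply, smul_eq_mul]
  ring

theorem hasGradientAt_integral_exp_inner [MeasurableSpace E] [BorelSpace E]
    [FiniteDimensional ℝ E] {ν : Measure E} {ε : ℝ} (hε : 0 < ε) {ψ : E → ℝ}
    (hint : ∀ z, Integrable (fun y => exp ((⟪z, y⟫ - ψ y) / ε)) ν)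
    (hint' : ∀ z, Integrable (fun y => ‖y‖ * exp ((⟪z, y⟫ - ψ y) / ε)) ν) (x : E) :
    HasGradientAt (fun z => ∫ y, exp ((⟪z, y⟫ - ψ y) / ε) ∂ν)
      (ε⁻¹ • ∫ y, exp ((⟪x, y⟫ - ψ y) / ε) • y ∂ν) x := by
  set b := stdOrthonormalBasis ℝ E
  have hmoment : Integrable (fun y => exp ((⟪x, y⟫ - ψ y) / ε) • y) ν :=
    (hint' x).mono' ((hint x).1.smul aestronglyMeasurable_id) <| ae_of_all _ fun y => by
      simp [norm_smul, abs_of_pos (exp_pos _), mul_comm]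
  have hderiv : HasFDerivAt (fun z => ∫ y, exp ((⟪z, y⟫ - ψ y) / ε) ∂ν)
      (∫ y, ε⁻¹ • innerSL ℝ (exp ((⟪x, y⟫ - ψ y) / ε) • y) ∂ν) x := by
    refine hasFDerivAt_integral_of_dominated_of_fderiv_le (Metric.closedBall_mem_nhds x one_pos)
      (bound := fun y => ε⁻¹ * ∑ σ, ‖y‖ * exp ((⟪x + b.signVertex σ, y⟫ - ψ y) / ε))
      (.of_forall fun z => (hint z).1) (hint x)
      (((innerSL ℝ).continuous.comp_aestronglyMeasurable hmoment.1).const_smul ε⁻¹)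
      (ae_of_all _ fun y z hz => ?_)
      ((integrable_finsetSum _ fun σ _ => hint' _).const_mul _)
      (ae_of_all _ fun y z _ => hasFDerivAt_exp_inner_sub_div ε (ψ y) y z)
    rw [norm_smul, innerSL_apply_norm, norm_smul, ← Finset.mul_sum]
    simp only [norm_inv, norm_of_nonneg hε.le, norm_of_nonneg (exp_pos _).le]
    rw [mul_comm (exp _)]
    gcongr
    exact b.exp_le_sum_exp_signVertex hε (ψ y) hz y
  rw [integral_smul, (innerSL ℝ).integral_comp_comm hmoment] at hderiv
  rwa [hasGradientAt_iff_hasFDerivAt, map_smulₛₗ, RCLike.conj_to_real]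

theorem gradient_log_partition_general {d : ℕ}
    (ε : ℝ) (hε : 0 < ε)
    (ν : Measure (EuclideanSpace ℝ (Fin d)))
    (ψ : EuclideanSpace ℝ (Fin d) → ℝ)
    (hpos : ∀ x, 0 < ∫ y, Real.exp ((⟪x, y⟫ - ψ y) / ε) ∂ν)
    (hint : ∀ x, Integrable (fun y => Real.exp ((⟪x, y⟫ - ψ y) / ε)) ν)
    (hint' : ∀ x, Integrable (fun y => ‖y‖ * Real.exp ((⟪x, y⟫ - ψ y) / ε)) ν) :
    ∀ x, HasGradientAt (fun z => ε * Real.log (∫ y, Real.exp ((⟪z, y⟫ - ψ y) / ε) ∂ν))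
      ((∫ y, Real.exp ((⟪x, y⟫ - ψ y) / ε) ∂ν)⁻¹ •
        ∫ y, Real.exp ((⟪x, y⟫ - ψ y) / ε) • y ∂ν) x := by
  intro x
  have hZ := (hasGradientAt_integral_exp_inner hε hint hint' x).hasFDerivAt
  have hφ := (hZ.log (hpos x).ne').const_mul ε
  have hscale : ε • (∫ y, exp ((⟪x, y⟫ - ψ y) / ε) ∂ν)⁻¹ •
      ε⁻¹ • ∫ y, exp ((⟪x, y⟫ - ψ y) / ε) • y ∂ν =
      (∫ y, exp ((⟪x, y⟫ - ψ y) / ε) ∂ν)⁻¹ • ∫ y, exp ((⟪x, y⟫ - ψ y) / ε) • y ∂ν := by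
    rw [smul_comm _ ε⁻¹, smul_smul, mul_inv_cancel₀ hε.ne', one_smul]
  rw [hasGradientAt_iff_hasFDerivAt, ← hscale, map_smulₛₗ, map_smulₛₗ]
  simpa only [RCLike.conj_to_real] using hφ

/-- differentiability of the log-partition function
`φ(x) = ε log ∫ e^{(x·y - ψ(y))/ε} dν(y)`, whose gradient at `x` is the barycenter
`(∫ y e^{(x·y - ψ(y))/ε} dν(y)) / (∫ e^{(x·y - ψ(y))/ε} dν(y))`. -/
theorem gradient_log_partition {d : ℕ}
    (ε : ℝ) (hε : 0 < ε)
    (ν : Measure (EuclideanSpace ℝ (Fin d))) [IsProbabilityMeasure ν]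
    (hν2 : Integrable (fun y => ‖y‖ ^ 2) ν)
    (ψ : EuclideanSpace ℝ (Fin d) → ℝ) (hψ : Measurable ψ)
    (hpos : ∀ x, 0 < ∫ y, Real.exp ((⟪x, y⟫ - ψ y) / ε) ∂ν)
    (hint : ∀ x, Integrable (fun y => Real.exp ((⟪x, y⟫ - ψ y) / ε)) ν)
    (hint' : ∀ x, Integrable (fun y => ‖y‖ * Real.exp ((⟪x, y⟫ - ψ y) / ε)) ν) :
    ∀ x, HasGradientAt (fun z => ε * Real.log (∫ y, Real.exp ((⟪z, y⟫ - ψ y) / ε) ∂ν))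
      ((∫ y, Real.exp ((⟪x, y⟫ - ψ y) / ε) ∂ν)⁻¹ •
        ∫ y, Real.exp ((⟪x, y⟫ - ψ y) / ε) • y ∂ν) x :=
  gradient_log_partition_general ε hε ν ψ hpos hint hint'
end

section
/- For every dimension d ≥ 1 there exists a constant C > 0 (depending only on d) such that for every twice continuously differentiable, compactly supported function u : ℝ^d → ℝ, sup_{x ∈ ℝ^d} |∇u(x)| ≤ C · (sup_{x ∈ ℝ^d} |∇²u(x)|)^{(d+2)/(d+4)} · (∫_{ℝ^d} |u(x)|² dx)^{1/(d+4)}. -/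
/-!
Let `A = max |u|`, attained at `x₀`, and `M = sup ‖D²u‖`. Taylor's formula gives
`|Du(z) v| ≤ 2A + M‖v‖²`; optimizing over the length of `v` yields the Landau-type bound
`‖Du‖² ≤ 8AM`. So `u` is `L`-Lipschitz with `L = √(8AM)`, hence `|u| ≥ A/2` on the ball of
radius `A/(2L)` about `x₀`, and `∫ u² ≥ (A/2)² (A/(2L))^d ω_d`, where `ω_d` is the volume of
the unit ball. Eliminating `A` through `L² = 8AM` gives
`‖Du(x)‖^(d+4) ≤ L^(d+4) ≤ 16^(d+2) ω_d⁻¹ M^(d+2) ∫ u²`.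
-/

open MeasureTheory Metric Set Module

theorem sq_le_of_forall_le_div_add_mul {a b c : ℝ} (ha : 0 ≤ a) (hb : 0 ≤ b) (hc : 0 ≤ c)
    (h : ∀ t > 0, a ≤ b / t + c * t) : a ^ 2 ≤ 4 * b * c := by
  rcases ha.eq_or_lt with rfl | ha
  · nlinarith [mul_nonneg hb hc]
  rcases hc.eq_or_lt with rfl | hc
  · have := h ((b + 1) / a) (by positivity)
    rw [zero_mul, add_zero, div_div_eq_mul_div, le_div_iff₀ (by positivity)] at this
    nlinarith
  · have := h (a / (2 * c)) (by positivity)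
    field_simp at this
    nlinarith

theorem le_mul_rpow_mul_rpow_of_pow_le {x K M I : ℝ} {m n : ℕ} (hn : n ≠ 0) (hx : 0 ≤ x)
    (hK : 0 ≤ K) (hM : 0 ≤ M) (hI : 0 ≤ I) (h : x ^ n ≤ K * M ^ m * I) :
    x ≤ K ^ (1 / n : ℝ) * M ^ (m / n : ℝ) * I ^ (1 / n : ℝ) := by
  rw [div_eq_mul_one_div (m : ℝ), Real.rpow_natCast_mul hM, ← Real.mul_rpow hK (by positivity),
    ← Real.mul_rpow (by positivity) hI, one_div,
    Real.le_rpow_inv_iff_of_pos hx (by positivity) (by positivity), Real.rpow_natCast]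
  exact h

section Landau

variable {E : Type*} [NormedAddCommGroup E] [NormedSpace ℝ E] {u : E → ℝ} {A M : ℝ}

theorem norm_fderiv_sub_fderiv_le (hu : ContDiff ℝ 2 u)
    (hM : ∀ y, ‖iteratedFDeriv ℝ 2 u y‖ ≤ M) (z y : E) :
    ‖fderiv ℝ u y - fderiv ℝ u z‖ ≤ M * ‖y - z‖ := by
  have hdiff : Differentiable ℝ (fderiv ℝ u) :=
    (hu.fderiv_right (m := 1) le_rfl).differentiable one_ne_zero
  refine convex_univ.norm_image_sub_le_of_norm_fderiv_le (fun w _ => hdiff w) (fun w _ => ?_)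
    (mem_univ z) (mem_univ y)
  rw [← norm_iteratedFDeriv_one, norm_iteratedFDeriv_fderiv]
  exact hM w

theorem abs_fderiv_apply_le (hu : ContDiff ℝ 2 u) (hA : ∀ y, |u y| ≤ A)
    (hM : ∀ y, ‖iteratedFDeriv ℝ 2 u y‖ ≤ M) (z v : E) :
    |fderiv ℝ u z v| ≤ 2 * A + M * ‖v‖ ^ 2 := by
  have taylor : |u (z + v) - u z - fderiv ℝ u z v| ≤ M * ‖v‖ * ‖v‖ := by
    have := (convex_closedBall z ‖v‖).norm_image_sub_le_of_norm_fderiv_le'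
      (fun w _ => (hu.differentiable two_ne_zero).differentiableAt)
      (fun y hy => (norm_fderiv_sub_fderiv_le hu hM z y).trans
        (mul_le_mul_of_nonneg_left (mem_closedBall_iff_norm.1 hy) ((norm_nonneg _).trans (hM z))))
      (mem_closedBall_self (norm_nonneg v)) (y := z + v) (by simp)
    simpa using this
  calc |fderiv ℝ u z v|
      = |(u (z + v) - u z) - (u (z + v) - u z - fderiv ℝ u z v)| := by rw [sub_sub_cancel]
    _ ≤ |u (z + v)| + |u z| + M * ‖v‖ * ‖v‖ :=
        (abs_sub _ _).trans (add_le_add (abs_sub _ _) taylor)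
    _ ≤ 2 * A + M * ‖v‖ ^ 2 := by linarith [hA (z + v), hA z]

theorem norm_fderiv_le_div_add_mul (hu : ContDiff ℝ 2 u) (hA : ∀ y, |u y| ≤ A)
    (hM : ∀ y, ‖iteratedFDeriv ℝ 2 u y‖ ≤ M) (z : E) {t : ℝ} (ht : 0 < t) :
    ‖fderiv ℝ u z‖ ≤ 2 * A / t + M * t := by
  have hA0 : 0 ≤ A := (abs_nonneg _).trans (hA z)
  have hM0 : 0 ≤ M := (norm_nonneg _).trans (hM z)
  refine ContinuousLinearMap.opNorm_le_of_unit_norm (by positivity) fun v hv => ?_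
  have := abs_fderiv_apply_le hu hA hM z (t • v)
  rw [map_smul, smul_eq_mul, abs_mul, abs_of_pos ht, norm_smul, hv, Real.norm_of_nonneg ht.le,
    mul_one] at this
  rw [Real.norm_eq_abs, div_add' _ _ _ ht.ne', le_div_iff₀ ht]
  linarith

theorem norm_fderiv_sq_le (hu : ContDiff ℝ 2 u) (hA : ∀ y, |u y| ≤ A)
    (hM : ∀ y, ‖iteratedFDeriv ℝ 2 u y‖ ≤ M) (z : E) :
    ‖fderiv ℝ u z‖ ^ 2 ≤ 8 * A * M := by
  have := sq_le_of_forall_le_div_add_mul (norm_nonneg _) (by linarith [abs_nonneg (u z), hA z])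
    ((norm_nonneg _).trans (hM z)) fun t ht => norm_fderiv_le_div_add_mul hu hA hM z ht
  linarith

end Landau

theorem sq_mul_measureReal_ball_le_integral_sq {α : Type*} [PseudoMetricSpace α] [ProperSpace α]
    [MeasurableSpace α] [OpensMeasurableSpace α] (μ : Measure α) [IsFiniteMeasureOnCompacts μ]
    {f : α → ℝ} {L : NNReal} (hf : LipschitzWith L f) (hL : 0 < L)
    (hint : Integrable (fun y => |f y| ^ 2) μ) (x₀ : α) :
    (|f x₀| / 2) ^ 2 * μ.real (ball x₀ (|f x₀| / (2 * L))) ≤ ∫ y, |f y| ^ 2 ∂μ := by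
  have half_le : ∀ y ∈ ball x₀ (|f x₀| / (2 * L)), (|f x₀| / 2) ^ 2 ≤ |f y| ^ 2 := by
    intro y hy
    have hdist : |f y - f x₀| ≤ |f x₀| / 2 := by
      calc |f y - f x₀| ≤ L * dist y x₀ := hf.dist_le_mul y x₀
        _ ≤ L * (|f x₀| / (2 * L)) := by gcongr; exact (mem_ball.1 hy).le
        _ = |f x₀| / 2 := by field_simp
    have := abs_sub_abs_le_abs_sub (f x₀) (f y)
    rw [abs_sub_comm] at this
    gcongr
    linarith
  calc (|f x₀| / 2) ^ 2 * μ.real (ball x₀ (|f x₀| / (2 * L)))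
      ≤ ∫ y in ball x₀ (|f x₀| / (2 * L)), |f y| ^ 2 ∂μ :=
        setIntegral_ge_of_const_le_real measurableSet_ball measure_ball_lt_top.ne half_le
          hint.integrableOn
    _ ≤ ∫ y, |f y| ^ 2 ∂μ :=
        setIntegral_le_integral hint (.of_forall fun y => by positivity)

section FiniteDimensional

variable {E : Type*} [NormedAddCommGroup E] [NormedSpace ℝ E] [FiniteDimensional ℝ E]
  [MeasurableSpace E] [BorelSpace E] (μ : Measure E) [μ.IsAddHaarMeasure] {u : E → ℝ} {M : ℝ}

theorem norm_fderiv_pow_mul_measureReal_ball_le (hu : ContDiff ℝ 2 u)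
    (hcs : HasCompactSupport u) (hM : ∀ y, ‖iteratedFDeriv ℝ 2 u y‖ ≤ M) (x : E) :
    ‖fderiv ℝ u x‖ ^ (finrank ℝ E + 4) * μ.real (ball 0 1) ≤
      16 ^ (finrank ℝ E + 2) * M ^ (finrank ℝ E + 2) * ∫ y, |u y| ^ 2 ∂μ := by
  have hcs2 : HasCompactSupport (fun y => |u y| ^ 2) :=
    hcs.comp_left (g := fun t => |t| ^ 2) (by simp)
  have hint : Integrable (fun y => |u y| ^ 2) μ :=
    (hu.continuous.abs.pow 2).integrable_of_hasCompactSupport hcs2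
  set n := finrank ℝ E
  obtain ⟨x₀, hx₀⟩ := hu.continuous.abs.exists_forall_ge_of_hasCompactSupport hcs.abs
  set A := |u x₀|
  set L : NNReal := ⟨√(8 * A * M), Real.sqrt_nonneg _⟩
  have hDu : ∀ z, ‖fderiv ℝ u z‖ ≤ L := fun z =>
    Real.le_sqrt_of_sq_le (norm_fderiv_sq_le hu hx₀ hM z)
  have hM0 : 0 ≤ M := (norm_nonneg _).trans (hM x)
  have hI0 : 0 ≤ ∫ y, |u y| ^ 2 ∂μ := integral_nonneg fun y => by positivity
  rcases (zero_le : 0 ≤ L).eq_or_lt with hL | hL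
  · have : ‖fderiv ℝ u x‖ = 0 := le_antisymm (by simpa [← hL] using hDu x) (norm_nonneg _)
    rw [this, zero_pow (by omega), zero_mul]
    positivity
  have hL2 : (L : ℝ) ^ 2 = 8 * A * M := Real.sq_sqrt (by positivity)
  have hA : 0 < A := by
    have : 0 < 8 * A * M := hL2 ▸ by positivity
    nlinarith [abs_nonneg (u x₀)]
  have hball := sq_mul_measureReal_ball_le_integral_sq μ
    (lipschitzWith_of_nnnorm_fderiv_le (hu.differentiable two_ne_zero) hDu) hL hint x₀
  rw [measureReal_def, Measure.addHaar_ball_of_pos μ x₀ (by positivity), ENNReal.toReal_mul,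
    ENNReal.toReal_ofReal (by positivity), ← measureReal_def] at hball
  calc ‖fderiv ℝ u x‖ ^ (n + 4) * μ.real (ball 0 1) ≤ L ^ (n + 4) * μ.real (ball 0 1) := by
        gcongr; exact hDu x
    _ = 16 ^ (n + 2) * M ^ (n + 2) *
          ((A / 2) ^ 2 * ((A / (2 * L)) ^ n * μ.real (ball 0 1))) := by
        have key : (L : ℝ) ^ (n + 4) * L ^ n = (8 * A * M) ^ (n + 2) := by
          rw [← hL2, ← pow_mul, ← pow_add]; ring_nf
        rw [div_pow, div_pow, mul_pow, show (16 : ℝ) ^ (n + 2) = 2 ^ (n + 2) * 8 ^ (n + 2) by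
          rw [← mul_pow]; norm_num]
        field_simp
        linear_combination μ.real (ball 0 1) * 4 * 2 ^ n * key
    _ ≤ 16 ^ (n + 2) * M ^ (n + 2) * ∫ y, |u y| ^ 2 ∂μ := by gcongr

end FiniteDimensional

theorem gagliardo_nirenberg_grad_sup_general (d : ℕ) :
    ∃ C > (0 : ℝ), ∀ u : EuclideanSpace ℝ (Fin d) → ℝ,
      ContDiff ℝ 2 u → HasCompactSupport u →
      ∀ x, ‖gradient u x‖ ≤
        C * (⨆ y, ‖iteratedFDeriv ℝ 2 u y‖) ^ (((d : ℝ) + 2) / ((d : ℝ) + 4)) *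
          (∫ y, |u y| ^ 2) ^ ((1 : ℝ) / ((d : ℝ) + 4)) := by
  set c := volume.real (ball (0 : EuclideanSpace ℝ (Fin d)) 1)
  have hc : 0 < c := ENNReal.toReal_pos (measure_ball_pos _ _ one_pos).ne' measure_ball_lt_top.ne
  refine ⟨(16 ^ (d + 2) / c) ^ ((1 : ℝ) / ((d : ℝ) + 4)), by positivity, fun u hu hcs x => ?_⟩
  have hM := le_ciSup <|
    (hu.continuous_iteratedFDeriv le_rfl).norm.bddAbove_range_of_hasCompactSupport
      (hcs.iteratedFDeriv 2).norm
  have key := norm_fderiv_pow_mul_measureReal_ball_le volume hu hcs hM x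
  rw [finrank_euclideanSpace_fin, ← le_div_iff₀ hc, mul_div_right_comm, mul_div_right_comm,
    ← toDual_gradient, LinearIsometryEquiv.norm_map] at key
  have := le_mul_rpow_mul_rpow_of_pow_le (by omega) (norm_nonneg _) (by positivity)
    (Real.iSup_nonneg fun y => norm_nonneg _) (integral_nonneg fun y => by positivity) key
  push_cast at this
  exact this

/-- Gagliardo–Nirenberg interpolation, `j = 1`, `k = 2`, `p = ∞`, `q = 2`,
`r = ∞`, `θ = (d+2)/(d+4)`: `‖∇u‖_∞ ≤ C ‖∇²u‖_∞^{(d+2)/(d+4)} ‖u‖_2^{2/(d+4)}` for every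
`C²` compactly supported `u : ℝ^d → ℝ`. -/
theorem gagliardo_nirenberg_grad_sup (d : ℕ) (hd : 1 ≤ d) :
    ∃ C > (0 : ℝ), ∀ u : EuclideanSpace ℝ (Fin d) → ℝ,
      ContDiff ℝ 2 u → HasCompactSupport u →
      ∀ x, ‖gradient u x‖ ≤
        C * (⨆ y, ‖iteratedFDeriv ℝ 2 u y‖) ^ (((d : ℝ) + 2) / ((d : ℝ) + 4)) *
          (∫ y, |u y| ^ 2) ^ ((1 : ℝ) / ((d : ℝ) + 4)) :=
  gagliardo_nirenberg_grad_sup_general d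
end
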